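/- arXiv:2507.11922 — 2 statements merged into one kernel-verified Lean document; each statement's English description precedes it below -/
import Mathlib

section
/- For every α ∈ (0,1) there exists a constant C_α such that for every integer m ≥ 3, every m×m correlation matrix Σ, and x⁰ ~ N(0, Σ): P( max_{t ∈ 𝕋} | m^{-1} Σ_{i=1}^m 1{x_i⁰ > t} − Φ̄(t) | / Φ̄(t) > C_α √(log m) ) < α, where 𝕋 = [√(log log m), √(5 log m)] ∩ ℕ. -/
open MeasureTheory ProbabilityTheory Filter

noncomputable section

/-- Standard normal CDF `Φ`. -/
def Phi (t : ℝ) : ℝ := ((gaussianReal 0 1) (Set.Iic t)).toReal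

/-- Standard normal upper tail `Φ̄(t) = 1 − Φ(t)`. -/
def PhiBar (t : ℝ) : ℝ := 1 - Phi t

/-- Standard normal density `φ`. -/
def stdPhi (t : ℝ) : ℝ := Real.exp (-(t ^ 2) / 2) / Real.sqrt (2 * Real.pi)

/-- Positive part `[x]₊`. -/
def posPart' (x : ℝ) : ℝ := max x 0

/-- A correlation matrix: symmetric positive semidefinite with unit diagonal. -/
def IsCorrMatrix {ι : Type*} [Fintype ι] (S : Matrix ι ι ℝ) : Prop :=
  S.PosSemidef ∧ ∀ i, S i i = 1

/-- `X` is a Gaussian random vector with mean `μ` and covariance `S`: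
every linear functional of `X` has the corresponding one-dimensional Gaussian law. -/
def HasLawGaussian {Ω : Type*} [MeasureSpace Ω] {ι : Type*} [Fintype ι]
    (X : Ω → ι → ℝ) (μ : ι → ℝ) (S : Matrix ι ι ℝ) : Prop :=
  (∀ i, Measurable fun ω => X ω i) ∧
  ∀ c : ι → ℝ,
    Measure.map (fun ω => ∑ i, c i * X ω i) volume
      = gaussianReal (∑ i, c i * μ i) (∑ i, ∑ j, c i * S i j * c j).toNNReal

/-- number of exceedances `Σ_i 1{x_i > t}` (as a real number). -/
def exceedCount {ι : Type*} [Fintype ι] (x : ι → ℝ) (t : ℝ) : ℝ :=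
  ∑ i, if t < x i then (1 : ℝ) else 0

/-- the quantity inside the supremum defining `π̂_θ(x; c)`. -/
def piHatTerm {ι : Type*} [Fintype ι] (θ c : ℝ) (x : ι → ℝ) (t : ℝ) : ℝ :=
  ((Fintype.card ι : ℝ)⁻¹ * exceedCount x t - PhiBar t - c * PhiBar t ^ θ) / (1 - PhiBar t)

/-- the estimator `π̂_θ(x; c) = sup_{t>0} [...]`. -/
def piHat {ι : Type*} [Fintype ι] (θ c : ℝ) (x : ι → ℝ) : ℝ :=
  sSup {y : ℝ | ∃ t : ℝ, 0 < t ∧ y = piHatTerm θ c x t}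

/-- the quantity inside the supremum defining `V_{n,θ}(x⁰)`. -/
def VTerm {ι : Type*} [Fintype ι] (θ : ℝ) (x : ι → ℝ) (t : ℝ) : ℝ :=
  |(Fintype.card ι : ℝ)⁻¹ * exceedCount x t - PhiBar t| / PhiBar t ^ θ

/-- the statistic `V_{n,θ}(x⁰) = sup_{t>0} |...| / Φ̄(t)^θ`. -/
def Vstat {ι : Type*} [Fintype ι] (θ : ℝ) (x : ι → ℝ) : ℝ :=
  sSup {y : ℝ | ∃ t : ℝ, 0 < t ∧ y = VTerm θ x t}

/-- the discretization grid `𝕋 = [√(log log m), √(5 log m)] ∩ ℕ`. -/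
def TT (m : ℕ) : Finset ℕ :=
  (Finset.range (m + 1)).filter
    (fun t => Real.sqrt (Real.log (Real.log (m : ℝ))) ≤ (t : ℝ) ∧
      (t : ℝ) ≤ Real.sqrt (5 * Real.log (m : ℝ)))

/-- the discretization grid `𝕋' = [√lo, √(5 log m)] ∩ ℕ` with a general lower endpoint `√lo`. -/
def TTlo (m : ℕ) (lo : ℝ) : Finset ℕ :=
  (Finset.range (m + 1)).filter
    (fun t => Real.sqrt lo ≤ (t : ℝ) ∧ (t : ℝ) ≤ Real.sqrt (5 * Real.log (m : ℝ)))

/-- maximum of `f` over a finite grid (as `sSup` of the image, `= 0` for the empty grid). -/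
def gridMax (S : Finset ℕ) (f : ℝ → ℝ) : ℝ :=
  sSup {y : ℝ | ∃ t ∈ S, y = f (t : ℝ)}

/-- the discretized estimator `π̂*_θ(x; c) = max_{t ∈ 𝕋} [...]`. -/
def piHatStar {ι : Type*} [Fintype ι] (m : ℕ) (θ c : ℝ) (x : ι → ℝ) : ℝ :=
  gridMax (TT m) (piHatTerm θ c x)

/-- the discretized statistic `V*_{n,θ}(x⁰) = max_{t ∈ 𝕋} |...| / Φ̄(t)^θ`. -/
def VstatStar {ι : Type*} [Fintype ι] (m : ℕ) (θ : ℝ) (x : ι → ℝ) : ℝ :=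
  gridMax (TT m) (VTerm θ x)

/-- probability of an event, as a real number. -/
def Pr {Ω : Type*} [MeasureSpace Ω] (A : Set Ω) : ℝ := (volume A).toReal

/-- conditional probability `P(A | E)`, as a real number. -/
def PrCond {Ω : Type*} [MeasureSpace Ω] (E A : Set Ω) : ℝ :=
  ((ProbabilityTheory.cond volume E) A).toReal


/-! ### Auxiliary lemmas for `stmt3` -/

lemma phiBar_eq' (t : ℝ) : ENNReal.ofReal (PhiBar t) = gaussianReal 0 1 (Set.Ioi t) := by
  have h1 : gaussianReal 0 1 (Set.Ioi t) = 1 - gaussianReal 0 1 (Set.Iic t) := by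
    rw [← Set.compl_Iic, measure_compl measurableSet_Iic (measure_ne_top _ _), measure_univ]
  rw [PhiBar, Phi, h1, ENNReal.ofReal_sub _ ENNReal.toReal_nonneg,
    ENNReal.ofReal_one, ENNReal.ofReal_toReal (measure_ne_top _ _)]

lemma phiBar_pos' (t : ℝ) : 0 < PhiBar t := by
  have h : gaussianReal 0 1 (Set.Ioi t) ≠ 0 := by
    intro h0
    have := (gaussianReal_absolutelyContinuous' 0 one_ne_zero) h0
    rw [Real.volume_Ioi] at this
    exact ENNReal.top_ne_zero this
  have h2 := phiBar_eq' t
  by_contra hc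
  push_neg at hc
  rw [ENNReal.ofReal_eq_zero.mpr hc] at h2
  exact h h2.symm

lemma phiBar_le_one' (t : ℝ) : PhiBar t ≤ 1 := by
  have := phiBar_eq' t
  have h2 : gaussianReal 0 1 (Set.Ioi t) ≤ 1 := prob_le_one
  rw [← this] at h2
  have := ENNReal.ofReal_le_one.mp h2
  exact this

lemma marginal_law' {m : ℕ} {Ω : Type} [MeasureSpace Ω] {S : Matrix (Fin m) (Fin m) ℝ}
    (hS : ∀ i, S i i = 1) {x0 : Ω → Fin m → ℝ} (hx : HasLawGaussian x0 0 S) (i : Fin m) :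
    Measure.map (fun ω => x0 ω i) volume = gaussianReal 0 1 := by
  have h := hx.2 (fun j => if j = i then 1 else 0)
  simp only [ite_mul, one_mul, zero_mul, Finset.sum_ite_eq', Finset.mem_univ, if_true,
    Pi.zero_apply, mul_zero, Finset.sum_const_zero, mul_ite] at h
  rw [h, hS i]
  norm_num

lemma tail_prob' {m : ℕ} {Ω : Type} [MeasureSpace Ω] {S : Matrix (Fin m) (Fin m) ℝ}
    (hS : ∀ i, S i i = 1) {x0 : Ω → Fin m → ℝ} (hx : HasLawGaussian x0 0 S) (i : Fin m)
    (t : ℝ) : volume {ω | t < x0 ω i} = ENNReal.ofReal (PhiBar t) := by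
  have hmap := marginal_law' hS hx i
  have : {ω | t < x0 ω i} = (fun ω => x0 ω i) ⁻¹' Set.Ioi t := rfl
  rw [this, ← Measure.map_apply (hx.1 i) measurableSet_Ioi, hmap, phiBar_eq']

lemma stmt3_aux (α C : ℝ) (hα0 : 0 < α) (hC1 : 1 ≤ C) (hCα : 8 / α ≤ C)
    (m : ℕ) (hm : 3 ≤ m) (S : Matrix (Fin m) (Fin m) ℝ) (hScorr : IsCorrMatrix S)
    (Ω : Type) [MeasureSpace Ω] [IsProbabilityMeasure (volume : Measure Ω)]
    (x0 : Ω → Fin m → ℝ) (hx : HasLawGaussian x0 0 S) :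
    Pr {ω | C * Real.sqrt (Real.log m) < VstatStar m 1 (x0 ω)} < α := by
  classical
  have hCpos : (0:ℝ) < C := by linarith
  have hm0 : (0:ℝ) < m := by positivity
  have hm3 : (3:ℝ) ≤ m := by exact_mod_cast hm
  have hlog1 : (1:ℝ) ≤ Real.log m := by
    have h3 : (1:ℝ) ≤ Real.log 3 := by
      rw [Real.le_log_iff_exp_le (by norm_num)]
      have := Real.exp_one_lt_d9
      linarith
    calc (1:ℝ) ≤ Real.log 3 := h3
      _ ≤ Real.log m := Real.log_le_log (by norm_num) hm3
  set L : ℝ := Real.sqrt (Real.log m) with hLdef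
  have hL1 : (1:ℝ) ≤ L := Real.one_le_sqrt.mpr hlog1
  have h5L : Real.sqrt (5 * Real.log m) ≤ 3 * L := by
    have h3 : Real.sqrt (5 * Real.log m) = Real.sqrt 5 * L := by
      rw [hLdef, Real.sqrt_mul (by norm_num)]
    have h4 : Real.sqrt 5 ≤ 3 := by
      have h5 : Real.sqrt 5 ≤ Real.sqrt 9 := Real.sqrt_le_sqrt (by norm_num)
      have h9 : Real.sqrt 9 = 3 := by
        rw [show (9:ℝ) = 3^2 by norm_num, Real.sqrt_sq (by norm_num)]
      linarith
    rw [h3]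
    nlinarith
  clear_value L
  have hLpos : (0:ℝ) < L := by linarith
  have hCL1 : (1:ℝ) ≤ C * L := by nlinarith
  have hCLpos : (0:ℝ) < C * L := by linarith
  rcases Finset.eq_empty_or_nonempty (TT m) with hTT | hTT
  · -- empty grid: the statistic is 0, the event is empty
    have hV : ∀ x : Fin m → ℝ, VstatStar m 1 x = 0 := by
      intro x
      rw [VstatStar, gridMax, hTT]
      simp [Real.sSup_empty]
    have hE : {ω : Ω | C * L < VstatStar m 1 (x0 ω)} = ∅ := by
      ext ω; simp only [Set.mem_setOf_eq, Set.mem_empty_iff_false, iff_false, not_lt, hV]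
      linarith
    rw [Pr, hE]
    simpa using hα0
  -- Markov bound for each t
  have hMarkov : ∀ t : ℕ, volume {ω : Ω |
      ENNReal.ofReal ((m:ℝ) * PhiBar t * (C * L)) ≤
        ∑ i, (if (t:ℝ) < x0 ω i then (1:ENNReal) else 0)} ≤
      ENNReal.ofReal (1 / (C * L)) := by
    intro t
    have hp : (0:ℝ) < PhiBar t := phiBar_pos' _
    have hapos : (0:ℝ) < (m:ℝ) * PhiBar t * (C * L) := by positivity
    have hfmeas : Measurable (fun ω : Ω => ∑ i, (if (t:ℝ) < x0 ω i then (1:ENNReal) else 0)) :=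
      Finset.measurable_sum _ (fun i _ => Measurable.ite
        (measurableSet_lt measurable_const (hx.1 i)) measurable_const measurable_const)
    have hlint : (∫⁻ ω, ∑ i, (if (t:ℝ) < x0 ω i then (1:ENNReal) else 0)) =
        (m : ENNReal) * ENNReal.ofReal (PhiBar t) := by
      rw [lintegral_finset_sum _ (fun i _ => Measurable.ite
        (measurableSet_lt measurable_const (hx.1 i)) measurable_const measurable_const)]
      have hterm : ∀ i : Fin m, (∫⁻ ω, (if (t:ℝ) < x0 ω i then (1:ENNReal) else 0)) =
          ENNReal.ofReal (PhiBar t) := by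
        intro i
        have hset : MeasurableSet {ω : Ω | (t:ℝ) < x0 ω i} :=
          measurableSet_lt measurable_const (hx.1 i)
        calc (∫⁻ ω, (if (t:ℝ) < x0 ω i then (1:ENNReal) else 0))
            = ∫⁻ ω, Set.indicator {ω : Ω | (t:ℝ) < x0 ω i} 1 ω := by
              congr 1
          _ = volume {ω : Ω | (t:ℝ) < x0 ω i} := lintegral_indicator_one hset
          _ = ENNReal.ofReal (PhiBar t) := tail_prob' hScorr.2 hx i t
      simp [hterm, Finset.sum_const]
    have h1 := mul_meas_ge_le_lintegral (μ := (volume : Measure Ω)) hfmeas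
      (ENNReal.ofReal ((m:ℝ) * PhiBar t * (C * L)))
    rw [hlint] at h1
    have ha0 : ENNReal.ofReal ((m:ℝ) * PhiBar t * (C * L)) ≠ 0 := by
      simp [ENNReal.ofReal_eq_zero, not_le, hapos]
    have hdiv : volume {ω : Ω |
        ENNReal.ofReal ((m:ℝ) * PhiBar t * (C * L)) ≤
          ∑ i, (if (t:ℝ) < x0 ω i then (1:ENNReal) else 0)} ≤
        ((m : ENNReal) * ENNReal.ofReal (PhiBar t)) /
          ENNReal.ofReal ((m:ℝ) * PhiBar t * (C * L)) := by
      rw [ENNReal.le_div_iff_mul_le (Or.inl ha0) (Or.inl ENNReal.ofReal_ne_top)]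
      rw [mul_comm]
      exact h1
    refine hdiv.trans ?_
    have hmp : (m : ENNReal) * ENNReal.ofReal (PhiBar t) =
        ENNReal.ofReal ((m:ℝ) * PhiBar t) := by
      rw [ENNReal.ofReal_mul hm0.le, ENNReal.ofReal_natCast]
    rw [hmp, ← ENNReal.ofReal_div_of_pos hapos]
    apply ENNReal.ofReal_le_ofReal
    apply le_of_eq
    field_simp
  -- the event is contained in the union of the bad sets
  have hsub : {ω : Ω | C * L < VstatStar m 1 (x0 ω)} ⊆ ⋃ t ∈ TT m, {ω : Ω |
      ENNReal.ofReal ((m:ℝ) * PhiBar t * (C * L)) ≤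
        ∑ i, (if (t:ℝ) < x0 ω i then (1:ENNReal) else 0)} := by
    intro ω hω
    simp only [Set.mem_setOf_eq] at hω
    rw [VstatStar, gridMax] at hω
    have hne : {y : ℝ | ∃ t ∈ TT m, y = VTerm 1 (x0 ω) (t:ℝ)}.Nonempty := by
      obtain ⟨t, ht⟩ := hTT
      exact ⟨VTerm 1 (x0 ω) (t:ℝ), t, ht, rfl⟩
    obtain ⟨y, ⟨t, htmem, rfl⟩, hy⟩ := exists_lt_of_lt_csSup hne hω
    refine Set.mem_biUnion htmem ?_
    rw [VTerm] at hy
    have hp : (0:ℝ) < PhiBar (t:ℝ) := phiBar_pos' _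
    rw [Real.rpow_one] at hy
    have hcard : (Fintype.card (Fin m) : ℝ) = m := by simp
    rw [hcard] at hy
    have hy2 : C * L * PhiBar (t:ℝ) < |(m:ℝ)⁻¹ * exceedCount (x0 ω) (t:ℝ) - PhiBar (t:ℝ)| := by
      rw [div_eq_mul_inv] at hy
      calc C * L * PhiBar (t:ℝ)
          < |(m:ℝ)⁻¹ * exceedCount (x0 ω) (t:ℝ) - PhiBar (t:ℝ)| * (PhiBar (t:ℝ))⁻¹ *
              PhiBar (t:ℝ) := by
            exact mul_lt_mul_of_pos_right hy hp
        _ = |(m:ℝ)⁻¹ * exceedCount (x0 ω) (t:ℝ) - PhiBar (t:ℝ)| := by field_simp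
    have hcnt0 : 0 ≤ exceedCount (x0 ω) (t:ℝ) := by
      rw [exceedCount]
      apply Finset.sum_nonneg; intro i _; positivity
    have hcase : C * L * PhiBar (t:ℝ) <
        (m:ℝ)⁻¹ * exceedCount (x0 ω) (t:ℝ) - PhiBar (t:ℝ) := by
      rcases lt_abs.mp hy2 with h | h
      · exact h
      · exfalso
        have h1 : PhiBar (t:ℝ) ≤ C * L * PhiBar (t:ℝ) := le_mul_of_one_le_left hp.le hCL1
        have h2 : 0 ≤ (m:ℝ)⁻¹ * exceedCount (x0 ω) (t:ℝ) := by positivity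
        linarith
    have hcntgt : (m:ℝ) * PhiBar (t:ℝ) * (C * L) < exceedCount (x0 ω) (t:ℝ) := by
      have h3 : (m:ℝ) * (C * L * PhiBar (t:ℝ)) <
          (m:ℝ) * ((m:ℝ)⁻¹ * exceedCount (x0 ω) (t:ℝ) - PhiBar (t:ℝ)) :=
        mul_lt_mul_of_pos_left hcase hm0
      have hmm : (m:ℝ) * ((m:ℝ)⁻¹ * exceedCount (x0 ω) (t:ℝ) - PhiBar (t:ℝ)) =
          exceedCount (x0 ω) (t:ℝ) - m * PhiBar (t:ℝ) := by
        field_simp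
      rw [hmm] at h3
      nlinarith [mul_pos hm0 hp]
    show ENNReal.ofReal ((m:ℝ) * PhiBar t * (C * L)) ≤
        ∑ i, (if (t:ℝ) < x0 ω i then (1:ENNReal) else 0)
    have hfcnt : (∑ i, (if (t:ℝ) < x0 ω i then (1:ENNReal) else 0)) =
        ENNReal.ofReal (exceedCount (x0 ω) (t:ℝ)) := by
      rw [exceedCount, ENNReal.ofReal_sum_of_nonneg (fun i _ => by positivity)]
      exact Finset.sum_congr rfl (fun i _ => by split <;> simp)
    rw [hfcnt]
    exact ENNReal.ofReal_le_ofReal hcntgt.le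
  -- cardinality bound
  have hcard : ((TT m).card : ℝ) ≤ 4 * L := by
    have hsub2 : TT m ⊆ Finset.range (⌊Real.sqrt (5 * Real.log m)⌋₊ + 1) := by
      intro t ht
      rw [TT, Finset.mem_filter] at ht
      rw [Finset.mem_range, Nat.lt_succ_iff]
      exact Nat.le_floor ht.2.2
    have h1 : (TT m).card ≤ ⌊Real.sqrt (5 * Real.log m)⌋₊ + 1 := by
      calc (TT m).card ≤ (Finset.range (⌊Real.sqrt (5 * Real.log m)⌋₊ + 1)).card :=
            Finset.card_le_card hsub2
        _ = ⌊Real.sqrt (5 * Real.log m)⌋₊ + 1 := Finset.card_range _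
    have h2 : ((TT m).card : ℝ) ≤ Real.sqrt (5 * Real.log m) + 1 := by
      have hfl := Nat.floor_le (Real.sqrt_nonneg (5 * Real.log m))
      calc ((TT m).card : ℝ) ≤ (⌊Real.sqrt (5 * Real.log m)⌋₊ : ℝ) + 1 := by
            exact_mod_cast h1
        _ ≤ Real.sqrt (5 * Real.log m) + 1 := by linarith
    linarith
  -- combine
  have hmeasE : volume {ω : Ω | C * L < VstatStar m 1 (x0 ω)} ≤
      ENNReal.ofReal (((TT m).card : ℝ) * (1 / (C * L))) := by
    calc volume {ω : Ω | C * L < VstatStar m 1 (x0 ω)}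
        ≤ volume (⋃ t ∈ TT m, {ω : Ω |
            ENNReal.ofReal ((m:ℝ) * PhiBar t * (C * L)) ≤
              ∑ i, (if (t:ℝ) < x0 ω i then (1:ENNReal) else 0)}) := measure_mono hsub
      _ ≤ ∑ t ∈ TT m, volume {ω : Ω |
            ENNReal.ofReal ((m:ℝ) * PhiBar t * (C * L)) ≤
              ∑ i, (if (t:ℝ) < x0 ω i then (1:ENNReal) else 0)} :=
          measure_biUnion_finset_le _ _
      _ ≤ ∑ _t ∈ TT m, ENNReal.ofReal (1 / (C * L)) :=
          Finset.sum_le_sum (fun t _ => hMarkov t)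
      _ = (TT m).card * ENNReal.ofReal (1 / (C * L)) := by
          rw [Finset.sum_const, nsmul_eq_mul]
      _ = ENNReal.ofReal (((TT m).card : ℝ) * (1 / (C * L))) := by
          rw [ENNReal.ofReal_mul (by positivity), ENNReal.ofReal_natCast]
  -- final numeric bound
  have hfinal : ((TT m).card : ℝ) * (1 / (C * L)) ≤ α / 2 := by
    have h1 : ((TT m).card : ℝ) * (1 / (C * L)) ≤ 4 * L * (1 / (C * L)) :=
      mul_le_mul_of_nonneg_right hcard (by positivity)
    have h2 : 4 * L * (1 / (C * L)) = 4 / C := by field_simp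
    have h3 : 4 / C ≤ α / 2 := by
      rw [div_le_div_iff₀ hCpos (by norm_num)]
      have h4 : 8 / α * α = 8 := div_mul_cancel₀ _ (ne_of_gt hα0)
      nlinarith [mul_le_mul_of_nonneg_right hCα hα0.le]
    linarith
  rw [Pr]
  have hle : (volume {ω : Ω | C * L < VstatStar m 1 (x0 ω)}).toReal ≤
      ((TT m).card : ℝ) * (1 / (C * L)) :=
    ENNReal.toReal_le_of_le_ofReal (by positivity) hmeasE
  linarith

/-- universal bounding sequence `c*_{m,1} = C_α √(log m)` for `θ = 1`. -/
theorem stmt3 (α : ℝ) (hα : α ∈ Set.Ioo (0:ℝ) 1) :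
    ∃ C : ℝ, ∀ m : ℕ, 3 ≤ m →
      ∀ (S : Matrix (Fin m) (Fin m) ℝ), IsCorrMatrix S →
      ∀ (Ω : Type) [MeasureSpace Ω] [IsProbabilityMeasure (volume : Measure Ω)]
        (x0 : Ω → Fin m → ℝ), HasLawGaussian x0 0 S →
      Pr {ω | C * Real.sqrt (Real.log m) < VstatStar m 1 (x0 ω)} < α := by
  obtain ⟨hα0, hα1⟩ := hα
  have h8 : (0:ℝ) < 8 / α := by positivity
  exact ⟨1 + 8 / α, fun m hm S hS Ω _ _ x0 hx =>
    stmt3_aux α (1 + 8 / α) hα0 (by linarith) (by linarith) m hm S hS Ω x0 hx⟩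

end
end

section
/- Let ρ ∈ (0,1), let n ≥ 2 and m = b·n for integers b, n, and let Σ be the m×m block-diagonal matrix with b blocks each equal to B = ρ 1_n 1_nᵀ + (1−ρ) I_n. Then: (1) Σ has eigenvalue nρ + 1 − ρ with multiplicity b and eigenvalue 1 − ρ with multiplicity m − b; (2) taking k = b principal factors in the principal factor decomposition, every row b_i of L satisfies ‖b_i‖₂² = (nρ − ρ + 1)/n, so a_i = (1 − ‖b_i‖₂²)^{−1/2} = ((1−ρ)(1 − 1/n))^{−1/2} ≥ (1−ρ)^{−1/2} for all i; (3) the residual covariance A = Σ − Σ_{j=1}^k λ_j γ_j γ_jᵀ is block diagonal with blocks ((ρ−1)/n) 1_n 1_nᵀ + (1−ρ) I_n, and the correlation matrix Σ̃ obtained by standardizing A has diagonal entries 1, within-block off-diagonal entries −1/(n−1), and zeros across blocks, so Σ_{i,j=1}^m |Σ̃_ij| = 2m. -/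
open MeasureTheory ProbabilityTheory Filter

noncomputable section

open scoped RealInnerProductSpace

private lemma sum_decomp' {b n : ℕ} (f : Fin (b*n) → ℝ) :
    ∑ i, f i = ∑ p : Fin b, ∑ r : Fin n, f (finProdFinEquiv (p, r)) := by
  rw [Fintype.sum_equiv finProdFinEquiv.symm f (fun x => f (finProdFinEquiv x)) (fun x => by simp only [Equiv.apply_symm_apply])]
  exact Fintype.sum_prod_type _

private lemma pf_div' {b n : ℕ} (p : Fin b) (r : Fin n) :
    ((finProdFinEquiv (p, r) : Fin (b*n)) : ℕ) / n = (p : ℕ) := by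
  have hn : 0 < n := r.pos
  have : ((finProdFinEquiv (p, r) : Fin (b*n)) : ℕ) = (r : ℕ) + n * p := by
    simp [finProdFinEquiv]
  rw [this, Nat.add_mul_div_left _ _ hn, Nat.div_eq_of_lt r.2, Nat.zero_add]

private lemma inner_eq_sum' {m : ℕ} (x y : EuclideanSpace ℝ (Fin m)) :
    ⟪x, y⟫ = ∑ i, x i * y i := by
  simp [PiLp.inner_apply]
  exact Finset.sum_congr rfl fun _ _ => mul_comm _ _

private lemma onb_complete' {m : ℕ} (B : OrthonormalBasis (Fin m) ℝ (EuclideanSpace ℝ (Fin m)))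
    (i j : Fin m) : ∑ l, B l i * B l j = if i = j then 1 else 0 := by
  have h := B.sum_inner_mul_inner (EuclideanSpace.single i (1:ℝ)) (EuclideanSpace.single j (1:ℝ))
  simp [EuclideanSpace.inner_single_left, EuclideanSpace.inner_single_right] at h
  rw [h]
  simp [EuclideanSpace.inner_single_left, EuclideanSpace.single_apply]
  by_cases hij : i = j <;> simp [hij, eq_comm]


/-- spectral analysis of the block-diagonal equicorrelation matrix and its
principal factor decomposition with `k = b` factors. -/
theorem stmt10
    (ρ : ℝ) (hρ : ρ ∈ Set.Ioo (0:ℝ) 1)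
    (n b : ℕ) (hn : 2 ≤ n) (hb : 1 ≤ b)
    (hbn : b ≤ b * n)
    (Sig : Matrix (Fin (b * n)) (Fin (b * n)) ℝ)
    (hSig : ∀ i j : Fin (b * n),
      Sig i j = if (i : ℕ) / n = (j : ℕ) / n then (if i = j then 1 else ρ) else 0) :
    ∃ (lam : Fin (b * n) → ℝ) (ev : Fin (b * n) → Fin (b * n) → ℝ),
      -- spectral decomposition, eigenvalues sorted non-increasingly
      (∀ l l' : Fin (b * n), l ≤ l' → lam l' ≤ lam l) ∧
      (∀ l l' : Fin (b * n), ∑ i, ev l i * ev l' i = if l = l' then (1:ℝ) else 0) ∧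
      (∀ i j, Sig i j = ∑ l, lam l * ev l i * ev l j) ∧
      -- (1) eigenvalue nρ+1−ρ with multiplicity b and eigenvalue 1−ρ with multiplicity m−b
      (∀ l : Fin (b * n), ((l : ℕ) < b → lam l = n * ρ + 1 - ρ)
        ∧ (b ≤ (l : ℕ) → lam l = 1 - ρ)) ∧
      -- (2) ‖b_i‖₂² = (nρ−ρ+1)/n and a_i = ((1−ρ)(1−1/n))^{−1/2} ≥ (1−ρ)^{−1/2}, with k = b
      (∀ i : Fin (b * n),
        ∑ j : Fin b, (Real.sqrt (lam (Fin.castLE hbn j)) * ev (Fin.castLE hbn j) i) ^ 2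
          = (n * ρ - ρ + 1) / n) ∧
      (∀ i : Fin (b * n),
        (Real.sqrt (1 - ∑ j : Fin b,
            (Real.sqrt (lam (Fin.castLE hbn j)) * ev (Fin.castLE hbn j) i) ^ 2))⁻¹
          = (Real.sqrt ((1 - ρ) * (1 - 1 / n)))⁻¹ ∧
        (Real.sqrt (1 - ρ))⁻¹
          ≤ (Real.sqrt (1 - ∑ j : Fin b,
              (Real.sqrt (lam (Fin.castLE hbn j)) * ev (Fin.castLE hbn j) i) ^ 2))⁻¹) ∧
      -- (3) the residual covariance A and its standardization Σ̃
      (let A : Matrix (Fin (b * n)) (Fin (b * n)) ℝ := fun i j =>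
        Sig i j - ∑ l : Fin (b * n), if (l : ℕ) < b then lam l * ev l i * ev l j else 0
       let St : Matrix (Fin (b * n)) (Fin (b * n)) ℝ := fun i j =>
        A i j / Real.sqrt (A i i * A j j)
       (∀ i j : Fin (b * n),
          A i j = if (i : ℕ) / n = (j : ℕ) / n
            then (ρ - 1) / n + (if i = j then 1 - ρ else 0) else 0) ∧
       (∀ i : Fin (b * n), St i i = 1) ∧
       (∀ i j : Fin (b * n), i ≠ j → (i : ℕ) / n = (j : ℕ) / n →
          St i j = -(1 / ((n : ℝ) - 1))) ∧
       (∀ i j : Fin (b * n), (i : ℕ) / n ≠ (j : ℕ) / n → St i j = 0) ∧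
       (∑ i, ∑ j, |St i j|) = 2 * (b * n : ℕ)) := by
  obtain ⟨hρ0, hρ1⟩ := hρ
  have hn0 : 0 < n := by omega
  have hnR : (0:ℝ) < n := by exact_mod_cast hn0
  have hnR1 : (1:ℝ) < n := by exact_mod_cast hn
  have hdiv_lt : ∀ i : Fin (b * n), (i : ℕ) / n < b := fun i =>
    (Nat.div_lt_iff_lt_mul hn0).2 i.2
  -- eigenvalues
  set lam : Fin (b*n) → ℝ := fun l => if (l:ℕ) < b then n*ρ + 1 - ρ else 1 - ρ with hlam
  -- candidate top eigenvectors
  set c : ℝ := (Real.sqrt n)⁻¹ with hc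
  have hcc : c * c = (n:ℝ)⁻¹ := by
    rw [hc, ← mul_inv, Real.mul_self_sqrt hnR.le]
  set v : Fin (b*n) → EuclideanSpace ℝ (Fin (b*n)) :=
    fun l => WithLp.toLp 2 (fun i => if (i:ℕ)/n = (l:ℕ) then c else 0) with hv
  have hvv : ∀ l i, v l i = if (i:ℕ)/n = (l:ℕ) then c else 0 := fun l i => rfl
  -- orthonormality of the restriction
  have horth : Orthonormal ℝ (Set.restrict {l : Fin (b*n) | (l:ℕ) < b} v) := by
    rw [orthonormal_iff_ite]
    rintro ⟨l, hl⟩ ⟨l', hl'⟩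
    rw [inner_eq_sum']
    simp only [Set.restrict_apply, hvv]
    change ∑ i : Fin (b*n), (if (i:ℕ)/n = (l:ℕ) then c else 0) * (if (i:ℕ)/n = (l':ℕ) then c else 0) = _
    rw [sum_decomp' (fun i => (if (i:ℕ)/n = (l:ℕ) then c else 0) * (if (i:ℕ)/n = (l':ℕ) then c else 0))]
    simp only [pf_div']
    by_cases h : l = l'
    · subst h
      simp only [Subtype.mk.injEq, if_pos rfl]
      rw [Finset.sum_eq_single (⟨(l:ℕ), hl⟩ : Fin b)]
      · simp only [if_pos rfl, Finset.sum_const, Finset.card_univ, Fintype.card_fin,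
          nsmul_eq_mul, if_true]
        rw [hcc]
        exact mul_inv_cancel₀ hnR.ne'
      · intro p _ hp
        have : (p:ℕ) ≠ (l:ℕ) := fun h => hp (Fin.ext h)
        simp [this]
      · simp
    · have hne : (l:ℕ) ≠ (l':ℕ) := fun hval => h (Fin.ext hval)
      rw [if_neg (by simp only [Subtype.mk.injEq]; exact h)]
      apply Finset.sum_eq_zero; intro p _
      apply Finset.sum_eq_zero; intro r _
      rcases eq_or_ne ((p:ℕ)) ((l:ℕ)) with h1 | h1
      · rcases eq_or_ne ((p:ℕ)) ((l':ℕ)) with h2 | h2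
        · exact absurd (h1.symm.trans h2) hne
        · simp [h2]
      · simp [h1]
  -- extend to an orthonormal basis
  obtain ⟨B, hB⟩ := horth.exists_orthonormalBasis_extension_of_card_eq
    (by simp)
  set ev : Fin (b*n) → Fin (b*n) → ℝ := fun l i => B l i with hev
  have hevlt : ∀ l : Fin (b*n), (l:ℕ) < b → ∀ i, ev l i = if (i:ℕ)/n = (l:ℕ) then c else 0 := by
    intro l hl i
    rw [hev]
    simp only []
    rw [hB l hl]
  -- row orthonormality
  have hrow : ∀ l l' : Fin (b*n), ∑ i, ev l i * ev l' i = if l = l' then (1:ℝ) else 0 := by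
    intro l l'
    have := (orthonormal_iff_ite.mp B.orthonormal) l l'
    rw [inner_eq_sum'] at this
    simpa using this
  -- completeness
  have hcomp : ∀ i j : Fin (b*n), ∑ l, ev l i * ev l j = if i = j then (1:ℝ) else 0 :=
    fun i j => onb_complete' B i j
  -- partial (top-b) completeness
  have hSb : ∀ i j : Fin (b*n),
      (∑ l : Fin (b*n), if (l:ℕ) < b then ev l i * ev l j else 0)
        = if (i:ℕ)/n = (j:ℕ)/n then (n:ℝ)⁻¹ else 0 := by
    intro i j
    by_cases hij : (i:ℕ)/n = (j:ℕ)/n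
    · rw [if_pos hij]
      have hlt : (i:ℕ)/n < b*n := lt_of_lt_of_le (hdiv_lt i) hbn
      rw [Finset.sum_eq_single (⟨(i:ℕ)/n, hlt⟩ : Fin (b*n))]
      · rw [if_pos (hdiv_lt i), hevlt _ (hdiv_lt i) i, hevlt _ (hdiv_lt i) j]
        rw [show ((⟨(i:ℕ)/n, hlt⟩ : Fin (b*n)) : ℕ) = (i:ℕ)/n from rfl]
        rw [if_pos rfl, if_pos hij.symm, hcc]
      · intro l _ hl
        by_cases hlb : (l:ℕ) < b
        · rw [if_pos hlb, hevlt _ hlb i, hevlt _ hlb j]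
          have : (i:ℕ)/n ≠ (l:ℕ) := fun hh => hl (Fin.ext hh.symm)
          rw [if_neg this, zero_mul]
        · rw [if_neg hlb]
      · simp
    · rw [if_neg hij]
      apply Finset.sum_eq_zero; intro l _
      by_cases hlb : (l:ℕ) < b
      · rw [if_pos hlb, hevlt _ hlb i, hevlt _ hlb j]
        rcases eq_or_ne ((i:ℕ)/n) ((l:ℕ)) with h1 | h1
        · have h2 : (j:ℕ)/n ≠ (l:ℕ) := fun h2 => hij (h1.trans h2.symm)
          rw [if_neg h2, mul_zero]
        · rw [if_neg h1, zero_mul]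
      · rw [if_neg hlb]
  -- positivity facts
  have h1ρ : (0:ℝ) < 1 - ρ := by linarith
  have hlamtop : (0:ℝ) < n*ρ + 1 - ρ := by nlinarith
  have hn1 : ((n:ℝ) - 1) ≠ 0 := by
    have : (1:ℝ) < n := hnR1; linarith
  have h1n : (0:ℝ) < 1 - 1/(n:ℝ) := by
    rw [sub_pos]; rw [div_lt_one hnR]; exact hnR1
  -- sorted
  have hsorted : ∀ l l' : Fin (b*n), l ≤ l' → lam l' ≤ lam l := by
    intro l l' hll
    simp only [hlam]
    by_cases h1 : (l:ℕ) < b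
    · by_cases h2 : (l':ℕ) < b
      · simp [h1, h2]
      · simp only [if_pos h1, if_neg h2]; nlinarith
    · have h2 : ¬ (l':ℕ) < b := fun h2 =>
        h1 (lt_of_le_of_lt (show (l:ℕ) ≤ (l':ℕ) from hll) h2)
      simp [h1, h2]
  -- spectral reconstruction
  have hrecon : ∀ i j, Sig i j = ∑ l, lam l * ev l i * ev l j := by
    intro i j
    have hterm : ∀ l : Fin (b*n), lam l * ev l i * ev l j
        = (1-ρ) * (ev l i * ev l j) + (n*ρ) * (if (l:ℕ) < b then ev l i * ev l j else 0) := by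
      intro l
      by_cases hlb : (l:ℕ) < b <;> simp only [hlam, if_pos, if_neg, hlb, if_true, if_false] <;> ring
    rw [Finset.sum_congr rfl (fun l _ => hterm l), Finset.sum_add_distrib,
      ← Finset.mul_sum, ← Finset.mul_sum, hcomp i j, hSb i j, hSig i j]
    by_cases hij : i = j
    · subst hij
      rw [if_pos rfl, if_pos rfl, if_pos rfl]
      simp only [eq_self_iff_true, if_true]
      field_simp
      ring
    · rw [if_neg hij]
      by_cases hblk : (i:ℕ)/n = (j:ℕ)/n
      · rw [if_pos hblk, if_pos hblk, if_neg hij]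
        field_simp
        ring
      · rw [if_neg hblk, if_neg hblk, if_neg hij]
        ring
  -- eigenvalue values
  have heig : ∀ l : Fin (b * n), ((l : ℕ) < b → lam l = n * ρ + 1 - ρ)
      ∧ (b ≤ (l : ℕ) → lam l = 1 - ρ) := by
    intro l
    constructor
    · intro h; simp only [hlam]; rw [if_pos h]
    · intro h; simp only [hlam]; rw [if_neg (not_lt.2 h)]
  -- row norms
  have hnorm : ∀ i : Fin (b*n),
      ∑ j : Fin b, (Real.sqrt (lam (Fin.castLE hbn j)) * ev (Fin.castLE hbn j) i) ^ 2
        = (n * ρ - ρ + 1) / n := by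
    intro i
    have hterm : ∀ j : Fin b,
        (Real.sqrt (lam (Fin.castLE hbn j)) * ev (Fin.castLE hbn j) i) ^ 2
          = (n*ρ + 1 - ρ) * (if (i:ℕ)/n = (j:ℕ) then (n:ℝ)⁻¹ else 0) := by
      intro j
      have hjb : ((Fin.castLE hbn j : Fin (b*n)) : ℕ) < b := j.2
      rw [hevlt _ hjb i, (heig _).1 hjb]
      rw [show ((Fin.castLE hbn j : Fin (b*n)) : ℕ) = (j:ℕ) from rfl]
      by_cases hc1 : (i:ℕ)/n = (j:ℕ)
      · rw [if_pos hc1, if_pos hc1, mul_pow, Real.sq_sqrt hlamtop.le, hc, inv_pow,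
          Real.sq_sqrt hnR.le]
      · rw [if_neg hc1, if_neg hc1, mul_zero, mul_zero, zero_pow two_ne_zero]
    rw [Finset.sum_congr rfl (fun j _ => hterm j), ← Finset.mul_sum]
    rw [Finset.sum_eq_single (⟨(i:ℕ)/n, hdiv_lt i⟩ : Fin b)]
    · rw [if_pos rfl]
      field_simp
      ring
    · intro p _ hp
      rw [if_neg (fun h => hp (Fin.ext h.symm))]
    · simp
  -- 1 - row norm
  have hresid : (1:ℝ) - (n * ρ - ρ + 1) / n = (1 - ρ) * (1 - 1/n) := by
    field_simp
    ring
  have hai : ∀ i : Fin (b * n),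
      (Real.sqrt (1 - ∑ j : Fin b,
          (Real.sqrt (lam (Fin.castLE hbn j)) * ev (Fin.castLE hbn j) i) ^ 2))⁻¹
        = (Real.sqrt ((1 - ρ) * (1 - 1 / n)))⁻¹ ∧
      (Real.sqrt (1 - ρ))⁻¹
        ≤ (Real.sqrt (1 - ∑ j : Fin b,
            (Real.sqrt (lam (Fin.castLE hbn j)) * ev (Fin.castLE hbn j) i) ^ 2))⁻¹ := by
    intro i
    rw [hnorm i, hresid]
    refine ⟨rfl, ?_⟩
    apply inv_anti₀
    · exact Real.sqrt_pos.2 (mul_pos h1ρ h1n)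
    · apply Real.sqrt_le_sqrt
      nlinarith [mul_pos h1ρ (div_pos (by norm_num : (0:ℝ) < 1) hnR)]
  -- Part 3
  have hAsum : ∀ i j : Fin (b*n),
      (∑ l : Fin (b*n), if (l:ℕ) < b then lam l * ev l i * ev l j else 0)
        = (n*ρ+1-ρ) * (if (i:ℕ)/n = (j:ℕ)/n then (n:ℝ)⁻¹ else 0) := by
    intro i j
    rw [← hSb i j, Finset.mul_sum]
    refine Finset.sum_congr rfl fun l _ => ?_
    by_cases hlb : (l:ℕ) < b
    · rw [if_pos hlb, if_pos hlb, (heig _).1 hlb]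
      ring
    · rw [if_neg hlb, if_neg hlb, mul_zero]
  have hA : ∀ i j : Fin (b*n),
      Sig i j - (∑ l : Fin (b*n), if (l:ℕ) < b then lam l * ev l i * ev l j else 0)
        = if (i:ℕ)/n = (j:ℕ)/n then (ρ-1)/n + (if i = j then 1-ρ else 0) else 0 := by
    intro i j
    rw [hAsum i j, hSig i j]
    by_cases hij : i = j
    · subst hij
      rw [if_pos rfl, if_pos rfl, if_pos rfl, if_pos rfl]
      simp only [eq_self_iff_true, if_true]
      field_simp
      ring
    · rw [if_neg hij]
      by_cases hblk : (i:ℕ)/n = (j:ℕ)/n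
      · rw [if_pos hblk, if_pos hblk, if_pos hblk, if_neg hij]
        field_simp
        ring
      · rw [if_neg hblk, if_neg hblk, if_neg hblk]
        ring
  set d : ℝ := (ρ-1)/n + (1-ρ) with hd
  have hdpos : 0 < d := by
    rw [hd]
    have : (ρ-1)/n + (1-ρ) = (1-ρ) * (1 - 1/n) := by field_simp; ring
    rw [this]
    exact mul_pos h1ρ h1n
  have hAdiag : ∀ i : Fin (b*n),
      Sig i i - (∑ l : Fin (b*n), if (l:ℕ) < b then lam l * ev l i * ev l i else 0) = d := by
    intro i
    rw [hA i i, if_pos rfl, if_pos rfl]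
  refine ⟨lam, ev, hsorted, hrow, hrecon, heig, hnorm, hai, ?_⟩
  intro A St
  have hA' : ∀ i j : Fin (b*n), A i j
      = if (i:ℕ)/n = (j:ℕ)/n then (ρ-1)/n + (if i = j then 1-ρ else 0) else 0 := hA
  have hAd : ∀ i : Fin (b*n), A i i = d := hAdiag
  have hsqrt : ∀ i j : Fin (b*n), Real.sqrt (A i i * A j j) = d := by
    intro i j
    rw [hAd i, hAd j, Real.sqrt_mul_self hdpos.le]
  have hStdiag : ∀ i : Fin (b*n), St i i = 1 := by
    intro i
    show A i i / Real.sqrt (A i i * A i i) = 1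
    rw [hsqrt i i, hAd i, div_self hdpos.ne']
  have hStoff : ∀ i j : Fin (b*n), i ≠ j → (i:ℕ)/n = (j:ℕ)/n →
      St i j = -(1 / ((n:ℝ) - 1)) := by
    intro i j hij hblk
    show A i j / Real.sqrt (A i i * A j j) = -(1 / ((n:ℝ) - 1))
    rw [hsqrt i j, hA' i j, if_pos hblk, if_neg hij, add_zero]
    rw [div_eq_iff hdpos.ne', hd]
    field_simp [hn1]
    ring
  have hStcross : ∀ i j : Fin (b*n), (i:ℕ)/n ≠ (j:ℕ)/n → St i j = 0 := by
    intro i j hblk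
    show A i j / Real.sqrt (A i i * A j j) = 0
    rw [hA' i j, if_neg hblk, zero_div]
  have hnn1 : (0:ℝ) < (n:ℝ) - 1 := by linarith
  have habs : ∀ i j : Fin (b*n), |St i j|
      = if (i:ℕ)/n = (j:ℕ)/n then (if i = j then (1:ℝ) else ((n:ℝ)-1)⁻¹) else 0 := by
    intro i j
    by_cases hblk : (i:ℕ)/n = (j:ℕ)/n
    · rw [if_pos hblk]
      by_cases hij : i = j
      · subst hij; rw [if_pos rfl, hStdiag i, abs_one]
      · rw [if_neg hij, hStoff i j hij hblk, abs_neg, abs_of_pos (by positivity), one_div]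
    · rw [if_neg hblk, hStcross i j hblk, abs_zero]
  have hrowsum : ∀ i : Fin (b*n), ∑ j, |St i j| = 2 := by
    intro i
    rw [Finset.sum_congr rfl (fun j _ => habs i j)]
    rw [sum_decomp' (fun j => if (i:ℕ)/n = (j:ℕ)/n
      then (if i = j then (1:ℝ) else ((n:ℝ)-1)⁻¹) else 0)]
    have hp0 : ((⟨(i:ℕ)/n, hdiv_lt i⟩ : Fin b)) = i.divNat := Fin.ext rfl
    rw [Finset.sum_eq_single (⟨(i:ℕ)/n, hdiv_lt i⟩ : Fin b)]
    · have key : ∀ r : Fin n,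
          (i = finProdFinEquiv ((⟨(i:ℕ)/n, hdiv_lt i⟩ : Fin b), r)) ↔ r = i.modNat := by
        intro r
        rw [hp0]
        constructor
        · intro h
          have h2 := congrArg (fun x => (finProdFinEquiv.symm x).2) h
          simp only [Equiv.symm_apply_apply] at h2
          exact h2.symm ▸ rfl
        · rintro rfl
          exact (show finProdFinEquiv (Fin.divNat i, Fin.modNat i) = i
            from finProdFinEquiv.apply_symm_apply i).symm
      have hterm : ∀ r : Fin n,
          (if (i:ℕ)/n = ((finProdFinEquiv ((⟨(i:ℕ)/n, hdiv_lt i⟩ : Fin b), r) : Fin (b*n)) : ℕ)/n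
            then (if i = finProdFinEquiv ((⟨(i:ℕ)/n, hdiv_lt i⟩ : Fin b), r)
              then (1:ℝ) else ((n:ℝ)-1)⁻¹) else 0)
          = ((n:ℝ)-1)⁻¹ + (if r = i.modNat then 1 - ((n:ℝ)-1)⁻¹ else 0) := by
        intro r
        rw [pf_div', if_pos rfl, if_congr (key r) rfl rfl]
        by_cases h : r = i.modNat <;> simp [h]
      rw [Finset.sum_congr rfl (fun r _ => hterm r), Finset.sum_add_distrib,
        Finset.sum_const, Finset.sum_ite_eq' Finset.univ (i.modNat)]
      simp only [Finset.card_univ, Fintype.card_fin, nsmul_eq_mul, Finset.mem_univ, if_true]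
      field_simp
      ring
    · intro p _ hp
      apply Finset.sum_eq_zero
      intro r _
      rw [pf_div', if_neg (fun h => hp (Fin.ext h.symm))]
    · simp
  rw [Finset.sum_congr rfl (fun i _ => hrowsum i), Finset.sum_const, Finset.card_univ,
    Fintype.card_fin, nsmul_eq_mul]
  refine ⟨hA', hStdiag, hStoff, hStcross, ?_⟩
  ring

end
end
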